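/- With θ = ω·t, the matrix exponential of the CWH dynamics matrix is given in closed form by exp(t·A) = M(θ), where M(θ) is the 6×6 matrix with rows: row 1 = (4 − 3cosθ, 0, 0, sinθ/ω, 2(1 − cosθ)/ω, 0); row 2 = (6(sinθ − θ), 1, 0, 2(cosθ − 1)/ω, (4sinθ − 3θ)/ω, 0); row 3 = (0, 0, cosθ, 0, 0, sinθ/ω); row 4 = (3ω·sinθ, 0, 0, cosθ, 2sinθ, 0); row 5 = (6ω(cosθ − 1), 0, 0, −2sinθ, 4cosθ − 3, 0); row 6 = (0, 0, −ω·sinθ, 0, 0, cosθ). This holds for all t ∈ ℝ. -/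

import Mathlib

noncomputable section

/-- Euclidean norm of a finite real vector. -/
def enorm' {m : ℕ} (v : Fin m → ℝ) : ℝ := Real.sqrt (∑ i, v i ^ 2)

/-- The CWH dynamics matrix. -/
def cwhA (ω : ℝ) : Matrix (Fin 6) (Fin 6) ℝ :=
  !![0, 0, 0, 1, 0, 0;
     0, 0, 0, 0, 1, 0;
     0, 0, 0, 0, 0, 1;
     3*ω^2, 0, 0, 0, 2*ω, 0;
     0, 0, 0, -2*ω, 0, 0;
     0, 0, -ω^2, 0, 0, 0]

/-- The CWH input matrix `B = [0; I₃]`. -/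
def cwhB : Matrix (Fin 6) (Fin 3) ℝ :=
  !![0, 0, 0;
     0, 0, 0;
     0, 0, 0;
     1, 0, 0;
     0, 1, 0;
     0, 0, 1]

/-- State transition matrix `exp(t A)`. -/
def expm (ω t : ℝ) : Matrix (Fin 6) (Fin 6) ℝ := NormedSpace.exp (t • cwhA ω)

/-- Horizontal concatenation of two `6 × 3` blocks into a `6 × 6` matrix. -/
def blockCat (M N : Matrix (Fin 6) (Fin 3) ℝ) : Matrix (Fin 6) (Fin 6) ℝ :=
  Matrix.of fun i j => if h : (j : ℕ) < 3 then M i ⟨j, h⟩ else N i ⟨(j : ℕ) - 3, by omega⟩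

/-- The aggregated impulse matrix `Φ_v(T) = [exp(T A) B  B]`. -/
def Phiv (ω T : ℝ) : Matrix (Fin 6) (Fin 6) ℝ := blockCat (expm ω T * cwhB) cwhB

/-- The two-impulse Gramian `G(T) = Φ_v(T) Φ_v(T)ᵀ`. -/
def gram (ω T : ℝ) : Matrix (Fin 6) (Fin 6) ℝ := Phiv ω T * (Phiv ω T).transpose

/-- First three components of a 6-vector. -/
def first3 (v : Fin 6 → ℝ) : Fin 3 → ℝ := fun i => v ⟨(i : ℕ), by omega⟩

/-- Last three components of a 6-vector. -/
def last3 (v : Fin 6 → ℝ) : Fin 3 → ℝ := fun i => v ⟨(i : ℕ) + 3, by omega⟩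

/-- The stacked two-impulse steering solution. -/
def dVsteer (ω T : ℝ) (x₀ xf : Fin 6 → ℝ) : Fin 6 → ℝ :=
  (Phiv ω T)⁻¹.mulVec (xf - (expm ω T).mulVec x₀)

/-- The fixed-duration two-impulse steering cost `J_T(x₀, x_f)`. -/
def Jfix (ω T : ℝ) (x₀ xf : Fin 6 → ℝ) : ℝ :=
  enorm' (first3 (dVsteer ω T x₀ xf)) + enorm' (last3 (dVsteer ω T x₀ xf))

/-- Euclidean operator norm of a `6 × 6` real matrix. -/
def opNorm (M : Matrix (Fin 6) (Fin 6) ℝ) : ℝ :=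
  ‖(Matrix.toEuclideanCLM (𝕜 := ℝ) M : EuclideanSpace ℝ (Fin 6) →L[ℝ] EuclideanSpace ℝ (Fin 6))‖

/-- The closed-form CWH state transition matrix `M(θ)`, `θ = ω t`. -/
def cwhSTM (ω θ : ℝ) : Matrix (Fin 6) (Fin 6) ℝ :=
  !![4 - 3 * Real.cos θ, 0, 0, Real.sin θ / ω, 2 * (1 - Real.cos θ) / ω, 0;
     6 * (Real.sin θ - θ), 1, 0, 2 * (Real.cos θ - 1) / ω, (4 * Real.sin θ - 3 * θ) / ω, 0;
     0, 0, Real.cos θ, 0, 0, Real.sin θ / ω;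
     3 * ω * Real.sin θ, 0, 0, Real.cos θ, 2 * Real.sin θ, 0;
     6 * ω * (Real.cos θ - 1), 0, 0, -2 * Real.sin θ, 4 * Real.cos θ - 3, 0;
     0, 0, -(ω * Real.sin θ), 0, 0, Real.cos θ]

/-! The CWH matrix satisfies `A⁴ = -ω² A²` (its minimal polynomial is `λ²(λ² + ω²)`), so the
exponential collapses to a cubic polynomial `F(t)` in `A`. It is identified by the initial value
problem `F' = A F`, `F 0 = 1`, whose solution is unique because `s ↦ exp((t - s) A) F(s)` has zero
derivative. Comparing entries of `A²` and `A³` then gives `M(ωt)`. -/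

open NormedSpace

section
variable {𝔸 : Type*} [NormedRing 𝔸] [NormedAlgebra ℝ 𝔸] [CompleteSpace 𝔸]

theorem exp_smul_eq_of_hasDerivAt {A : 𝔸} {F : ℝ → 𝔸} (hF₀ : F 0 = 1)
    (hF : ∀ t, HasDerivAt F (A * F t) t) (t : ℝ) : exp (t • A) = F t := by
  have hderiv (s : ℝ) : HasDerivAt (fun u : ℝ => exp ((t - u) • A) * F u) 0 s := by
    refine (((hasDerivAt_exp_smul_const A (t - s)).scomp s
      ((hasDerivAt_id s).const_sub t)).mul (hF s)).congr_deriv ?_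
    simp only [Function.comp_apply, neg_one_smul, neg_mul, mul_assoc, neg_add_cancel]
  simpa [hF₀] using (is_const_of_deriv_eq_zero (fun u => (hderiv u).differentiableAt)
      (fun u => (hderiv u).deriv) t 0).symm

theorem exp_smul_of_pow_four_eq_neg_sq_smul_sq {A : 𝔸} {ω : ℝ} (hω : ω ≠ 0)
    (hA : A ^ 4 = -ω ^ 2 • A ^ 2) (t : ℝ) :
    exp (t • A) = 1 + t • A + ((1 - Real.cos (ω * t)) / ω ^ 2) • A ^ 2
      + ((ω * t - Real.sin (ω * t)) / ω ^ 3) • A ^ 3 := by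
  apply exp_smul_eq_of_hasDerivAt
  · simp
  intro s
  have hcos := (Real.hasDerivAt_cos (ω * s)).comp s ((hasDerivAt_id s).const_mul ω)
  have hsin := (Real.hasDerivAt_sin (ω * s)).comp s ((hasDerivAt_id s).const_mul ω)
  refine ((((hasDerivAt_id s).smul_const A).const_add 1).add
    ((((hcos.const_sub 1).div_const (ω ^ 2)).smul_const (A ^ 2)))).add
    ((((hasDerivAt_id s).const_mul ω).sub hsin).div_const (ω ^ 3) |>.smul_const (A ^ 3))
    |>.congr_deriv ?_
  simp only [mul_add, mul_smul_comm, mul_one, ← sq, ← pow_succ', hA, smul_smul]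
  match_scalars <;> field_simp
  ring
end

theorem cwhA_sq (ω : ℝ) : cwhA ω ^ 2 =
    !![3 * ω ^ 2, 0, 0, 0, 2 * ω, 0;
       0, 0, 0, -2 * ω, 0, 0;
       0, 0, -ω ^ 2, 0, 0, 0;
       0, 0, 0, -ω ^ 2, 0, 0;
       -6 * ω ^ 3, 0, 0, 0, -4 * ω ^ 2, 0;
       0, 0, 0, 0, 0, -ω ^ 2] := by
  ext i j
  fin_cases i <;> fin_cases j <;> simp [cwhA, sq, Matrix.mul_apply, Fin.sum_univ_six] <;> ring

theorem cwhA_pow_three (ω : ℝ) : cwhA ω ^ 3 =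
    !![0, 0, 0, -ω ^ 2, 0, 0;
       -6 * ω ^ 3, 0, 0, 0, -4 * ω ^ 2, 0;
       0, 0, 0, 0, 0, -ω ^ 2;
       -3 * ω ^ 4, 0, 0, 0, -2 * ω ^ 3, 0;
       0, 0, 0, 2 * ω ^ 3, 0, 0;
       0, 0, ω ^ 4, 0, 0, 0] := by
  rw [pow_succ, cwhA_sq]
  ext i j
  fin_cases i <;> fin_cases j <;> simp [cwhA, Matrix.mul_apply, Fin.sum_univ_six] <;> ring

theorem cwhA_pow_four (ω : ℝ) : cwhA ω ^ 4 = -ω ^ 2 • cwhA ω ^ 2 := by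
  rw [show 4 = 2 + 2 by rfl, pow_add, cwhA_sq]
  ext i j
  fin_cases i <;> fin_cases j <;> simp [Matrix.mul_apply, Fin.sum_univ_six] <;> ring

theorem cwhSTM_mul_eq_cubic {ω : ℝ} (hω : ω ≠ 0) (t : ℝ) :
    cwhSTM ω (ω * t) = 1 + t • cwhA ω + ((1 - Real.cos (ω * t)) / ω ^ 2) • cwhA ω ^ 2
      + ((ω * t - Real.sin (ω * t)) / ω ^ 3) • cwhA ω ^ 3 := by
  rw [cwhA_sq, cwhA_pow_three]
  ext i j
  fin_cases i <;> fin_cases j <;> simp [cwhSTM, cwhA] <;> field_simp <;> ring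

attribute [local instance] Matrix.linftyOpNormedRing Matrix.linftyOpNormedAlgebra

/-- **Closed form of the CWH matrix exponential**: `exp(t A) = M(ω t)` for all `t ∈ ℝ`. -/
theorem cwh_exp_closed_form (ω : ℝ) (hω : 0 < ω) :
    ∀ t : ℝ, expm ω t = cwhSTM ω (ω * t) := by
  intro t
  rw [cwhSTM_mul_eq_cubic hω.ne']
  exact exp_smul_of_pow_four_eq_neg_sq_smul_sq hω.ne' (cwhA_pow_four ω) t

end
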